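/- arXiv:1902.09194 — 7 statements merged into one kernel-verified Lean document; each statement's English description precedes it below -/
import Mathlib

section
/- Let a, b, c be real quaternions and set d := a^2 + b·(star b) + a·(b + star b), where star denotes quaternion conjugation. If d ≠ 0, then x := d⁻¹·(a·c + c·star b) satisfies the Sylvester equation a·x + x·b = c. -/
/-!
If `b + b'` and `b * b'` are central, then `x ↦ a * x + x * b` sends `a * c + c * b'` to `d * c`
with `d = a ^ 2 + b * b' + a * (b + b')`, and `d` commutes with `a`; so when `d` is invertible,
`d⁻¹ * (a * c + c * b')` solves the Sylvester equation `a * x + x * b = c`. For quaternions take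
`b' = star b`: the trace `b + star b` and the norm `b * star b` are real.
-/

section Sylvester

variable {R : Type*} [Ring R] {a b b' : R}

theorem sylvester_apply_eq_mul (c : R) (hs : ∀ x, Commute (b + b') x)
    (hn : ∀ x, Commute (b * b') x) :
    a * (a * c + c * b') + (a * c + c * b') * b = (a ^ 2 + b * b' + a * (b + b')) * c := by
  have hbb' : b' * b = b * b' := by
    have : Commute b' b := by simpa using (hs b).sub_left (Commute.refl b)
    exact this.eq
  calc a * (a * c + c * b') + (a * c + c * b') * b
      = a ^ 2 * c + a * (c * (b + b')) + c * (b' * b) := by noncomm_ring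
    _ = a ^ 2 * c + a * ((b + b') * c) + (b * b') * c := by
        rw [hbb', (hs c).eq, (hn c).eq]
    _ = (a ^ 2 + b * b' + a * (b + b')) * c := by noncomm_ring

theorem commute_sylvester_coeff (hs : ∀ x, Commute (b + b') x)
    (hn : ∀ x, Commute (b * b') x) : Commute a (a ^ 2 + b * b' + a * (b + b')) :=
  (((Commute.refl a).pow_right 2).add_right (hn a).symm).add_right
    ((Commute.refl a).mul_right (hs a).symm)

end Sylvester

theorem sylvester_solution {D : Type*} [DivisionRing D] (a b b' c : D)
    (hs : ∀ x, Commute (b + b') x) (hn : ∀ x, Commute (b * b') x)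
    (hd : a ^ 2 + b * b' + a * (b + b') ≠ 0) :
    a * ((a ^ 2 + b * b' + a * (b + b'))⁻¹ * (a * c + c * b')) +
      ((a ^ 2 + b * b' + a * (b + b'))⁻¹ * (a * c + c * b')) * b = c := by
  rw [← mul_assoc, ((commute_sylvester_coeff hs hn).inv_right₀).eq, mul_assoc, mul_assoc,
    ← mul_add, sylvester_apply_eq_mul c hs hn, ← mul_assoc, inv_mul_cancel₀ hd, one_mul]

namespace QuaternionAlgebra

variable {R : Type*} [CommRing R] {c₁ c₂ c₃ : R}

theorem commute_self_add_star (a x : QuaternionAlgebra R c₁ c₂ c₃) : Commute (a + star a) x := by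
  rw [self_add_star']
  exact coe_commute _ x

theorem commute_mul_star (a x : QuaternionAlgebra R c₁ c₂ c₃) : Commute (a * star a) x := by
  rw [mul_star_eq_coe]
  exact coe_commute _ x

end QuaternionAlgebra

theorem quaternion_sylvester_left_solution (a b c : Quaternion ℝ)
    (hd : a ^ 2 + b * star b + a * (b + star b) ≠ 0) :
    a * ((a ^ 2 + b * star b + a * (b + star b))⁻¹ * (a * c + c * star b)) +
      ((a ^ 2 + b * star b + a * (b + star b))⁻¹ * (a * c + c * star b)) * b = c :=
  sylvester_solution a b (star b) c (QuaternionAlgebra.commute_self_add_star b)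
    (QuaternionAlgebra.commute_mul_star b) hd
end

section
/- Let a, b, c be real quaternions and set d' := b^2 + (star a)·a + b·(a + star a), where star denotes quaternion conjugation. If d' ≠ 0, then x := ((star a)·c + c·b)·d'⁻¹ satisfies the Sylvester equation a·x + x·b = c. -/
/-!
For a quaternion `a`, both `t = a + star a` and `n = star a * a` are real, hence central, and `a`
commutes with `star a`. Expanding, `a * (star a * c + c * b) + (star a * c + c * b) * b` equals
`n c + t c b + c b² = c (b² + n + b t) = c d`. Since `b` commutes with `d`, right division by `d`
turns this into `a x + x b = c` for `x = (star a * c + c * b) d⁻¹`.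
-/

section Sylvester

variable {R : Type*}

theorem sylvester_mul_eq_mul_of_mem_center [Ring R] {a a' : R}
    (hn : a' * a ∈ Set.center R) (ht : a + a' ∈ Set.center R) (b c : R) :
    a * (a' * c + c * b) + (a' * c + c * b) * b = c * (b ^ 2 + a' * a + b * (a + a')) := by
  have hnc := Semigroup.mem_center_iff.mp hn
  have htc := Semigroup.mem_center_iff.mp ht
  have hcomm : a * a' = a' * a := by
    simpa [mul_add, add_mul] using htc a
  calc a * (a' * c + c * b) + (a' * c + c * b) * b
      = a * a' * c + (a + a') * c * b + c * b ^ 2 := by noncomm_ring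
    _ = c * (a' * a) + c * ((a + a') * b) + c * b ^ 2 := by
        rw [hcomm, ← hnc c, ← htc c, mul_assoc]
    _ = c * (b ^ 2 + a' * a + b * (a + a')) := by rw [htc b]; noncomm_ring

theorem sylvester_solution_of_mem_center [DivisionRing R] {a a' : R}
    (hn : a' * a ∈ Set.center R) (ht : a + a' ∈ Set.center R) {b : R} (c : R)
    (hd : b ^ 2 + a' * a + b * (a + a') ≠ 0) :
    a * ((a' * c + c * b) * (b ^ 2 + a' * a + b * (a + a'))⁻¹) +
      ((a' * c + c * b) * (b ^ 2 + a' * a + b * (a + a'))⁻¹) * b = c := by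
  set d := b ^ 2 + a' * a + b * (a + a')
  have hbd : Commute b d :=
    (((Commute.self_pow b 2).add_right (Semigroup.mem_center_iff.mp hn b)).add_right
      ((Commute.refl b).mul_right (Semigroup.mem_center_iff.mp ht b)))
  rw [mul_assoc _ d⁻¹ b, hbd.inv_right₀.symm.eq, ← mul_assoc, ← mul_assoc, ← add_mul,
    sylvester_mul_eq_mul_of_mem_center hn ht, mul_inv_cancel_right₀ hd]

end Sylvester

theorem Quaternion.star_mul_self_mem_center {R : Type*} [CommRing R] (a : Quaternion R) :
    star a * a ∈ Set.center (Quaternion R) := by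
  rw [Quaternion.star_mul_self, ← Quaternion.algebraMap_def]
  exact Set.algebraMap_mem_center _

theorem Quaternion.self_add_star_mem_center {R : Type*} [CommRing R] (a : Quaternion R) :
    a + star a ∈ Set.center (Quaternion R) := by
  rw [Quaternion.self_add_star', ← Quaternion.algebraMap_def]
  exact Set.algebraMap_mem_center _

theorem quaternion_sylvester_right_solution (a b c : Quaternion ℝ)
    (hd : b ^ 2 + star a * a + b * (a + star a) ≠ 0) :
    a * ((star a * c + c * b) * (b ^ 2 + star a * a + b * (a + star a))⁻¹) +
      ((star a * c + c * b) * (b ^ 2 + star a * a + b * (a + star a))⁻¹) * b = c :=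
  sylvester_solution_of_mem_center (Quaternion.star_mul_self_mem_center a)
    (Quaternion.self_add_star_mem_center a) c hd
end

section
/- Let a, b, c, x be real quaternions with a·x + x·b = c, and set d := a^2 + b·(star b) + a·(b + star b), where star denotes quaternion conjugation. Then d·x = a·c + c·star b; in particular, if d ≠ 0 then x = d⁻¹·(a·c + c·star b), so the solution of the Sylvester equation is unique. -/
-- Multiplying `a * x + x * b` by `a` on the left and by `b'` on the right eliminates `x * b`.
theorem sylvester_mul_eq_of_commute {R : Type*} [Ring R] {a b b' x : R}
    (hsum : Commute (b + b') x) (hprod : Commute (b * b') x) :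
    (a ^ 2 + b * b' + a * (b + b')) * x = a * (a * x + x * b) + (a * x + x * b) * b' := by
  calc (a ^ 2 + b * b' + a * (b + b')) * x
      = a ^ 2 * x + x * (b * b') + a * (x * (b + b')) := by
        rw [add_mul, add_mul, hprod.eq, mul_assoc a, hsum.eq]
    _ = a * (a * x + x * b) + (a * x + x * b) * b' := by noncomm_ring

namespace Quaternion

variable {R : Type*} [CommRing R] (b x : Quaternion R)

theorem commute_self_add_star : Commute (b + star b) x := by
  rw [self_add_star']
  exact coe_commute _ x

theorem commute_self_mul_star : Commute (b * star b) x := by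
  rw [mul_star_eq_coe]
  exact coe_commute _ x

end Quaternion

theorem quaternion_sylvester_uniqueness (a b c x : Quaternion ℝ)
    (hx : a * x + x * b = c) :
    (a ^ 2 + b * star b + a * (b + star b)) * x = a * c + c * star b ∧
      (a ^ 2 + b * star b + a * (b + star b) ≠ 0 →
        x = (a ^ 2 + b * star b + a * (b + star b))⁻¹ * (a * c + c * star b)) := by
  have key : (a ^ 2 + b * star b + a * (b + star b)) * x = a * c + c * star b := by
    rw [← hx]
    exact sylvester_mul_eq_of_commute (Quaternion.commute_self_add_star b x)
      (Quaternion.commute_self_mul_star b x)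
  exact ⟨key, fun hd => (eq_inv_mul_iff_mul_eq₀ hd).mpr key⟩
end

section
/- Let w : Fin 3 → ℝ with each w i equal to 1 or −1, let Q be the diagonal quadratic form on Fin 3 → ℝ with weights w (QuadraticMap.weightedSumSquares), and let A = CliffordAlgebra Q. Define the Clifford conjugation conj : A → A as the composition of the reversal anti-automorphism with the grade involution. Then for every a ∈ A, the product a · conj a belongs to the center of A. -/
/-!
Clifford conjugation `star x = reverse (involute x)` is an anti-involution, so it fixes
`a * star a`. In dimension three it acts by `+1` on grades `0, 3` and by `-1` on grades `1, 2`,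
so `x + star x` only has a scalar and a pseudoscalar part; the pseudoscalar `e₀ e₁ e₂` is central
because each `eᵢ` anticommutes with the other two. Hence `2 • (a * star a)` is central.
-/

open QuadraticMap Submodule

namespace CliffordAlgebra

section General

variable {R M : Type*} [CommRing R] [AddCommGroup M] [Module R M] {Q : QuadraticForm R M}

theorem mem_center_of_forall_ι_mul_comm {c : CliffordAlgebra Q}
    (h : ∀ m, ι Q m * c = c * ι Q m) : c ∈ Subalgebra.center R (CliffordAlgebra Q) := by
  rw [Subalgebra.mem_center_iff]
  intro b
  induction b using CliffordAlgebra.induction with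
  | algebraMap r => exact Algebra.commutes r c
  | ι m => exact h m
  | mul x y hx hy => rw [mul_assoc, hy, ← mul_assoc, hx, mul_assoc]
  | add x y hx hy => rw [add_mul, mul_add, hx, hy]

theorem eq_top_of_one_mem_of_ι_mul_mem (p : Submodule R (CliffordAlgebra Q)) (h1 : 1 ∈ p)
    (hι : ∀ m, ∀ x ∈ p, ι Q m * x ∈ p) : p = ⊤ := by
  have mul_mem : ∀ y, ∀ x ∈ p, y * x ∈ p := by
    intro y
    induction y using CliffordAlgebra.induction with
    | algebraMap r => intro x hx; rw [← Algebra.smul_def]; exact p.smul_mem r hx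
    | ι m => exact hι m
    | mul y z hy hz => intro x hx; rw [mul_assoc]; exact hy _ (hz _ hx)
    | add y z hy hz => intro x hx; rw [add_mul]; exact p.add_mem (hy _ hx) (hz _ hx)
  exact eq_top_iff.mpr fun y _ => by simpa using mul_mem y 1 h1

end General

section Diagonal

variable {R n : Type*} [CommRing R] [Fintype n] [DecidableEq n] (w : n → R)

def basisVector (i : n) : CliffordAlgebra (weightedSumSquares R w) := ι _ (Pi.single i 1)

theorem ι_eq_sum_smul_basisVector (v : n → R) :
    ι (weightedSumSquares R w) v = ∑ i, v i • basisVector w i := by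
  simp_rw [basisVector, ← map_smul, ← map_sum]
  congr 1
  ext k
  simp [Finset.sum_apply, Pi.single_apply]

@[simp]
theorem star_basisVector (i : n) : star (basisVector w i) = -basisVector w i := star_ι _

@[simp]
theorem basisVector_mul_self (i : n) :
    basisVector w i * basisVector w i = algebraMap R _ (w i) := by
  rw [basisVector, ι_sq_scalar, weightedSumSquares_apply]
  simp [Pi.single_apply]

@[simp]
theorem basisVector_mul_basisVector_mul_self (i : n) (x : CliffordAlgebra (weightedSumSquares R w)) :
    basisVector w i * (basisVector w i * x) = w i • x := by
  rw [← mul_assoc, basisVector_mul_self, Algebra.smul_def]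

theorem basisVector_mul_basisVector_comm {i j : n} (h : i ≠ j) :
    basisVector w i * basisVector w j = -(basisVector w j * basisVector w i) := by
  refine ι_mul_ι_comm_of_isOrtho ?_
  simp only [isOrtho_def, weightedSumSquares_apply, smul_eq_mul]
  rw [Fintype.sum_eq_add i j h, Fintype.sum_eq_add i j h, Fintype.sum_eq_add i j h] <;>
    simp +contextual [h, h.symm]

variable [LinearOrder n]

@[simp]
theorem basisVector_mul_basisVector_of_lt {i j : n} (h : j < i) :
    basisVector w i * basisVector w j = -(basisVector w j * basisVector w i) :=
  basisVector_mul_basisVector_comm w h.ne'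

@[simp]
theorem basisVector_mul_basisVector_mul_of_lt {i j : n} (h : j < i)
    (x : CliffordAlgebra (weightedSumSquares R w)) :
    basisVector w i * (basisVector w j * x) = -(basisVector w j * (basisVector w i * x)) := by
  rw [← mul_assoc, basisVector_mul_basisVector_of_lt w h, neg_mul, mul_assoc]

end Diagonal

section Three

variable {R : Type*} [CommRing R] (w : Fin 3 → R)

-- Right-associated, so that each monomial is in the normal form of the `simp` lemmas above.
def monomials : Set (CliffordAlgebra (weightedSumSquares R w)) :=
  {1, basisVector w 0, basisVector w 1, basisVector w 2,
    basisVector w 0 * basisVector w 1, basisVector w 0 * basisVector w 2,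
    basisVector w 1 * basisVector w 2, basisVector w 0 * (basisVector w 1 * basisVector w 2)}

theorem basisVector_mul_mem_span_monomials (i : Fin 3)
    {x : CliffordAlgebra (weightedSumSquares R w)} (hx : x ∈ span R (monomials w)) :
    basisVector w i * x ∈ span R (monomials w) := by
  refine (span_le (p := (span R (monomials w)).comap (LinearMap.mulLeft R (basisVector w i)))).mpr
    (fun m hm => ?_) hx
  simp only [monomials, Set.mem_insert_iff, Set.mem_singleton_iff] at hm
  rcases hm with rfl | rfl | rfl | rfl | rfl | rfl | rfl | rfl <;> fin_cases i <;>
    simp [Algebra.algebraMap_eq_smul_one] <;>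
    (try apply smul_mem) <;> exact subset_span (by simp [monomials])

theorem span_monomials_eq_top : span R (monomials w) = ⊤ := by
  refine eq_top_of_one_mem_of_ι_mul_mem _ (subset_span (by simp [monomials])) fun v x hx => ?_
  rw [ι_eq_sum_smul_basisVector, Finset.sum_mul]
  exact sum_mem fun i _ => smul_mul_assoc (v i) (basisVector w i) x ▸
    smul_mem _ _ (basisVector_mul_mem_span_monomials w i hx)

theorem basisVector_mul_basisVector_mul_basisVector_mem_center :
    basisVector w 0 * (basisVector w 1 * basisVector w 2) ∈
      Subalgebra.center R (CliffordAlgebra (weightedSumSquares R w)) := by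
  refine mem_center_of_forall_ι_mul_comm fun v => ?_
  simp [ι_eq_sum_smul_basisVector, Fin.sum_univ_three, add_mul, mul_add, mul_assoc,
    Algebra.algebraMap_eq_smul_one]

theorem add_star_mem_center (x : CliffordAlgebra (weightedSumSquares R w)) :
    x + star x ∈ Subalgebra.center R (CliffordAlgebra (weightedSumSquares R w)) := by
  have hx : x ∈ span R (monomials w) := span_monomials_eq_top w ▸ mem_top
  induction hx using span_induction with
  | mem m hm =>
    simp only [monomials, Set.mem_insert_iff, Set.mem_singleton_iff] at hm
    rcases hm with rfl | rfl | rfl | rfl | rfl | rfl | rfl | rfl <;>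
      simp [mul_assoc, add_mem, basisVector_mul_basisVector_mul_basisVector_mem_center]
  | zero => simp
  | add x y _ _ hx hy => simpa [add_add_add_comm] using add_mem hx hy
  | smul r x _ hx => simpa [smul_add] using Subalgebra.smul_mem _ hx r

end Three

end CliffordAlgebra

theorem clifford3_mul_conj_mem_center_general (w : Fin 3 → ℝ)
    (a : CliffordAlgebra (QuadraticMap.weightedSumSquares ℝ w)) :
    a * CliffordAlgebra.reverse (CliffordAlgebra.involute a) ∈
      Subalgebra.center ℝ (CliffordAlgebra (QuadraticMap.weightedSumSquares ℝ w)) := by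
  rw [← CliffordAlgebra.star_def]
  have h := CliffordAlgebra.add_star_mem_center w (a * star a)
  rw [(IsSelfAdjoint.mul_star_self a).star_eq, ← two_smul ℝ] at h
  simpa using Subalgebra.smul_mem _ h (2⁻¹ : ℝ)

theorem clifford3_mul_conj_mem_center (w : Fin 3 → ℝ)
    (hw : ∀ i, w i = 1 ∨ w i = -1)
    (a : CliffordAlgebra (QuadraticMap.weightedSumSquares ℝ w)) :
    a * CliffordAlgebra.reverse (CliffordAlgebra.involute a) ∈
      Subalgebra.center ℝ (CliffordAlgebra (QuadraticMap.weightedSumSquares ℝ w)) :=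
  clifford3_mul_conj_mem_center_general w a
end

section
/- Let w : Fin 2 → ℝ with each w i equal to 1 or −1, let Q be the diagonal quadratic form on Fin 2 → ℝ with weights w (QuadraticMap.weightedSumSquares), and let A = CliffordAlgebra Q. Define the Clifford conjugation conj : A → A as the composition of the reversal anti-automorphism with the grade involution. Then for every a ∈ A, the product a · conj a is a real scalar, i.e., it lies in the range of the algebra map ℝ → A. -/
/-! A binary quadratic form `c₁ x² + c₂ y²` has the quaternion algebra `ℍ[R,c₁,0,c₂]` as its
Clifford algebra, and under this isomorphism Clifford conjugation becomes quaternion conjugation.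
So `a * star a` corresponds to `q * star q`, the reduced norm of `q`, which is a scalar. -/

open CliffordAlgebraQuaternion

namespace CliffordAlgebra

variable {R M₁ M₂ : Type*} [CommRing R] [AddCommGroup M₁] [AddCommGroup M₂]
  [Module R M₁] [Module R M₂] {Q₁ : QuadraticForm R M₁} {Q₂ : QuadraticForm R M₂}

theorem map_star (f : Q₁ →qᵢ Q₂) (x : CliffordAlgebra Q₁) :
    map f (star x) = star (map f x) := by
  induction x using CliffordAlgebra.induction with
  | algebraMap r => simp only [star_algebraMap, AlgHom.commutes]
  | ι m => simp only [star_ι, map_neg, map_apply_ι]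
  | mul a b ha hb => rw [star_mul, map_mul, map_mul, star_mul, ha, hb]
  | add a b ha hb => rw [star_add, map_add, map_add, star_add, ha, hb]

theorem mul_star_mem_range_algebraMap_of_isometryEquiv (e : Q₁.IsometryEquiv Q₂)
    (h : ∀ y : CliffordAlgebra Q₂, y * star y ∈ Set.range (algebraMap R (CliffordAlgebra Q₂)))
    (x : CliffordAlgebra Q₁) : x * star x ∈ Set.range (algebraMap R (CliffordAlgebra Q₁)) := by
  obtain ⟨r, hr⟩ := h (equivOfIsometry e x)
  refine ⟨r, (equivOfIsometry e).injective ?_⟩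
  rw [AlgEquiv.commutes, hr, map_mul, equivOfIsometry_apply, equivOfIsometry_apply, map_star]

end CliffordAlgebra

namespace CliffordAlgebraQuaternion

variable {R : Type*} [CommRing R]

theorem mul_star_mem_range_algebraMap {c₁ c₂ : R} (x : CliffordAlgebra (Q c₁ c₂)) :
    x * star x ∈ Set.range (algebraMap R (CliffordAlgebra (Q c₁ c₂))) := by
  refine ⟨(toQuaternion x * star (toQuaternion x)).re, ?_⟩
  rw [← ofQuaternion_toQuaternion (x * star x), map_mul, toQuaternion_star,
    QuaternionAlgebra.mul_star_eq_coe]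
  exact (ofQuaternion.commutes _).symm

def weightedSumSquaresIsometryEquivQ (w : Fin 2 → R) :
    (QuadraticMap.weightedSumSquares R w).IsometryEquiv (Q (w 0) (w 1)) where
  __ := LinearEquiv.finTwoArrow R R
  map_app' v := by
    simp [QuadraticMap.weightedSumSquares_apply, Fin.sum_univ_two, LinearEquiv.finTwoArrow]

end CliffordAlgebraQuaternion

theorem clifford2_mul_conj_is_scalar_general (w : Fin 2 → ℝ)
    (a : CliffordAlgebra (QuadraticMap.weightedSumSquares ℝ w)) :
    a * CliffordAlgebra.reverse (CliffordAlgebra.involute a) ∈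
      Set.range (algebraMap ℝ (CliffordAlgebra (QuadraticMap.weightedSumSquares ℝ w))) := by
  rw [← CliffordAlgebra.star_def]
  exact CliffordAlgebra.mul_star_mem_range_algebraMap_of_isometryEquiv
    (weightedSumSquaresIsometryEquivQ w) mul_star_mem_range_algebraMap a

theorem clifford2_mul_conj_is_scalar (w : Fin 2 → ℝ)
    (hw : ∀ i, w i = 1 ∨ w i = -1)
    (a : CliffordAlgebra (QuadraticMap.weightedSumSquares ℝ w)) :
    a * CliffordAlgebra.reverse (CliffordAlgebra.involute a) ∈
      Set.range (algebraMap ℝ (CliffordAlgebra (QuadraticMap.weightedSumSquares ℝ w))) :=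
  clifford2_mul_conj_is_scalar_general w a
end

section
/- Let w : Fin 3 → ℝ with each w i equal to 1 or −1, let Q be the diagonal quadratic form on Fin 3 → ℝ with weights w, let A = CliffordAlgebra Q, and let conj : A → A denote Clifford conjugation (reversal composed with grade involution). Let a, b, c, x ∈ A satisfy a·x + x·b = c, and set d := a^2 + b·conj b + a·(b + conj b). Then d·x = a·c + c·conj b. -/
/-!
In the Clifford algebra of any diagonal form on `ℝ³`, Clifford conjugation is `+1` on the basis
monomials of grades 0 and 3 and `-1` on those of grades 1 and 2, so `y + conj y` is twice the
scalar-plus-pseudoscalar part of `y`. The pseudoscalar `e₀e₁e₂` commutes with every basis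
vector, so `y + conj y` is central; and `b * conj b`, being fixed by `conj`, is half of such an
element. Expanding `a * c + c * conj b` with `c = a * x + x * b` and moving these two central
elements past `x` gives the identity.
-/

/-- Clifford conjugation: reversal composed with grade involution. -/
noncomputable def cliffordConj {n : ℕ} (w : Fin n → ℝ) :
    CliffordAlgebra (QuadraticMap.weightedSumSquares ℝ w) →
      CliffordAlgebra (QuadraticMap.weightedSumSquares ℝ w) :=
  fun a => CliffordAlgebra.reverse (CliffordAlgebra.involute a)

open CliffordAlgebra QuadraticMap Submodule

namespace WeightedClifford

section
variable {n : ℕ} (w : Fin n → ℝ)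

local notation "A" => CliffordAlgebra (weightedSumSquares ℝ w)

noncomputable def basisVec (i : Fin n) : A := ι (weightedSumSquares ℝ w) (Pi.single i 1)

lemma ι_eq_sum_smul_basisVec (m : Fin n → ℝ) :
    ι (weightedSumSquares ℝ w) m = ∑ i, m i • basisVec w i := by
  conv_lhs => rw [pi_eq_sum_univ' m]
  simp only [map_sum, map_smul, basisVec]

lemma adjoin_range_basisVec : Algebra.adjoin ℝ (Set.range (basisVec w)) = ⊤ := by
  rw [eq_top_iff, ← adjoin_range_ι, Algebra.adjoin_le_iff]
  rintro _ ⟨m, rfl⟩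
  rw [ι_eq_sum_smul_basisVec]
  exact sum_mem fun i _ =>
    Subalgebra.smul_mem _ (Algebra.subset_adjoin (Set.mem_range_self i)) _

lemma mem_center_of_forall_basisVec_mul_comm {z : A}
    (h : ∀ i, basisVec w i * z = z * basisVec w i) :
    z ∈ Subalgebra.center ℝ A := by
  have hle : Algebra.adjoin ℝ (Set.range (basisVec w)) ≤ Subalgebra.centralizer ℝ {z} :=
    Algebra.adjoin_le <| by rintro _ ⟨i, rfl⟩ _ rfl; exact (h i).symm
  rw [adjoin_range_basisVec, top_le_iff] at hle
  refine Subalgebra.mem_center_iff.2 fun y => ?_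
  have hy : y ∈ Subalgebra.centralizer ℝ {z} := hle ▸ Algebra.mem_top
  exact (hy z rfl).symm

lemma basisVec_mul_self (i : Fin n) : basisVec w i * basisVec w i = w i • (1 : A) := by
  rw [basisVec, ι_sq_scalar, Algebra.algebraMap_eq_smul_one]
  simp [weightedSumSquares_apply, Pi.single_apply]

lemma basisVec_mul_basisVec_comm {i j : Fin n} (h : i ≠ j) :
    basisVec w i * basisVec w j = -(basisVec w j * basisVec w i) := by
  have horth : polar (weightedSumSquares ℝ w) (Pi.single i 1) (Pi.single j 1) = 0 := by
    simp [polar, weightedSumSquares_apply, Pi.single_apply, mul_add, Finset.sum_add_distrib, h,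
      h.symm]
  refine eq_neg_of_add_eq_zero_left ?_
  rw [basisVec, basisVec, ι_mul_ι_add_swap, horth, map_zero]

lemma basisVec_mul_basisVec_mul_self (i : Fin n) (z : A) :
    basisVec w i * (basisVec w i * z) = w i • z := by
  rw [← mul_assoc, basisVec_mul_self, smul_one_mul]

lemma basisVec_mul_basisVec_mul_comm {i j : Fin n} (h : i ≠ j) (z : A) :
    basisVec w i * (basisVec w j * z) = -(basisVec w j * (basisVec w i * z)) := by
  rw [← mul_assoc, basisVec_mul_basisVec_comm w h, neg_mul, mul_assoc]

lemma cliffordConj_mul (u v : A) :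
    cliffordConj w (u * v) = cliffordConj w v * cliffordConj w u := by
  simp only [cliffordConj, map_mul, reverse.map_mul]

lemma cliffordConj_cliffordConj (u : A) : cliffordConj w (cliffordConj w u) = u := by
  rw [cliffordConj, cliffordConj, ← reverse_involute, reverse_reverse, involute_involute]

lemma cliffordConj_basisVec (i : Fin n) : cliffordConj w (basisVec w i) = -basisVec w i := by
  rw [cliffordConj, basisVec, involute_ι, map_neg, reverse_ι]

lemma cliffordConj_basisVec_mul_basisVec {i j : Fin n} (h : i ≠ j) :
    cliffordConj w (basisVec w i * basisVec w j) = -(basisVec w i * basisVec w j) := by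
  rw [cliffordConj_mul, cliffordConj_basisVec, cliffordConj_basisVec, neg_mul_neg,
    basisVec_mul_basisVec_comm w h.symm]

end

section
variable (w : Fin 3 → ℝ)

local notation "A" => CliffordAlgebra (weightedSumSquares ℝ w)
local notation "e" => basisVec w

noncomputable def pseudoscalar : A := e 0 * (e 1 * e 2)

def monomials : Set A := {1, e 0, e 1, e 2, e 0 * e 1, e 0 * e 2, e 1 * e 2, pseudoscalar w}

lemma basisVec_mul_mem_span_monomials (i : Fin 3) {g : A} (hg : g ∈ monomials w) :
    e i * g ∈ span ℝ (monomials w) := by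
  have e10 := basisVec_mul_basisVec_comm w (show (1 : Fin 3) ≠ 0 by decide)
  have e20 := basisVec_mul_basisVec_comm w (show (2 : Fin 3) ≠ 0 by decide)
  have e21 := basisVec_mul_basisVec_comm w (show (2 : Fin 3) ≠ 1 by decide)
  have e10' := basisVec_mul_basisVec_mul_comm w (show (1 : Fin 3) ≠ 0 by decide)
  have e20' := basisVec_mul_basisVec_mul_comm w (show (2 : Fin 3) ≠ 0 by decide)
  have e21' := basisVec_mul_basisVec_mul_comm w (show (2 : Fin 3) ≠ 1 by decide)
  simp only [monomials, pseudoscalar, Set.mem_insert_iff, Set.mem_singleton_iff] at hg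
  -- each product is, up to sign and a weight, again a monomial
  rcases hg with rfl | rfl | rfl | rfl | rfl | rfl | rfl | rfl <;> fin_cases i <;>
    (try simp only [Fin.zero_eta, Fin.mk_one, Fin.reduceFinMk, mul_one, e10, e20, e21, e10', e20',
      e21', basisVec_mul_self, basisVec_mul_basisVec_mul_self, mul_neg, mul_smul_comm, neg_neg]) <;>
    repeat (first | apply neg_mem | apply Submodule.smul_mem)
  all_goals exact subset_span (by simp [monomials, pseudoscalar])

lemma span_monomials_eq_top : span ℝ (monomials w) = ⊤ := by
  suffices h : ∀ y p : A, p ∈ span ℝ (monomials w) → y * p ∈ span ℝ (monomials w) by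
    refine eq_top_iff'.2 fun y => ?_
    simpa using h y 1 (subset_span (by simp [monomials]))
  intro y
  have hy : y ∈ Algebra.adjoin ℝ (Set.range e) := adjoin_range_basisVec w ▸ Algebra.mem_top
  induction hy using Algebra.adjoin_induction with
  | mem _ hg =>
    obtain ⟨i, rfl⟩ := hg
    intro p hp
    induction hp using span_induction with
    | mem g hg => exact basisVec_mul_mem_span_monomials w i hg
    | zero => simp
    | add u v _ _ hu hv => simpa [mul_add] using add_mem hu hv
    | smul r u _ hu => simpa using smul_mem _ r hu
  | algebraMap r => intro p hp; simpa [Algebra.smul_def] using smul_mem _ r hp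
  | add u v _ _ hu hv => intro p hp; simpa [add_mul] using add_mem (hu p hp) (hv p hp)
  | mul u v _ _ hu hv => intro p hp; simpa [mul_assoc] using hu _ (hv p hp)

lemma pseudoscalar_mem_center : pseudoscalar w ∈ Subalgebra.center ℝ A := by
  have e10 := basisVec_mul_basisVec_mul_comm w (show (1 : Fin 3) ≠ 0 by decide)
  have e20 := basisVec_mul_basisVec_mul_comm w (show (2 : Fin 3) ≠ 0 by decide)
  have e21 := basisVec_mul_basisVec_mul_comm w (show (2 : Fin 3) ≠ 1 by decide)
  have e20' := basisVec_mul_basisVec_comm w (show (2 : Fin 3) ≠ 0 by decide)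
  have e21' := basisVec_mul_basisVec_comm w (show (2 : Fin 3) ≠ 1 by decide)
  refine mem_center_of_forall_basisVec_mul_comm w fun i => ?_
  fin_cases i <;>
    simp [pseudoscalar, mul_assoc, e10, e20, e21, e20', e21', basisVec_mul_self,
      basisVec_mul_basisVec_mul_self]

lemma cliffordConj_pseudoscalar : cliffordConj w (pseudoscalar w) = pseudoscalar w := by
  have e10 := basisVec_mul_basisVec_mul_comm w (show (1 : Fin 3) ≠ 0 by decide)
  have e20 := basisVec_mul_basisVec_comm w (show (2 : Fin 3) ≠ 0 by decide)
  have e21 := basisVec_mul_basisVec_comm w (show (2 : Fin 3) ≠ 1 by decide)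
  simp [pseudoscalar, cliffordConj_mul, cliffordConj_basisVec, mul_assoc, e10, e20, e21]

lemma add_cliffordConj_mem_center (y : A) : y + cliffordConj w y ∈ Subalgebra.center ℝ A := by
  let f : A →ₗ[ℝ] A := LinearMap.id + reverse.comp involute.toLinearMap
  suffices h : span ℝ (monomials w) ≤ (Subalgebra.center ℝ A).toSubmodule.comap f from
    h (span_monomials_eq_top w ▸ mem_top)
  rw [span_le]
  intro g hg
  simp only [monomials, Set.mem_insert_iff, Set.mem_singleton_iff] at hg
  change g + cliffordConj w g ∈ Subalgebra.center ℝ A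
  rcases hg with rfl | rfl | rfl | rfl | rfl | rfl | rfl | rfl
  · simpa [cliffordConj] using add_mem (one_mem _) (one_mem _)
  iterate 3 · rw [cliffordConj_basisVec, add_neg_cancel]; exact zero_mem _
  iterate 3
    · rw [cliffordConj_basisVec_mul_basisVec w (by decide), add_neg_cancel]
      exact zero_mem _
  · rw [cliffordConj_pseudoscalar]
    exact add_mem (pseudoscalar_mem_center w) (pseudoscalar_mem_center w)

lemma mul_cliffordConj_mem_center (y : A) : y * cliffordConj w y ∈ Subalgebra.center ℝ A := by
  have h := add_cliffordConj_mem_center w (y * cliffordConj w y)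
  rw [cliffordConj_mul, cliffordConj_cliffordConj, ← two_smul ℝ] at h
  simpa using Subalgebra.smul_mem _ h (2⁻¹ : ℝ)

end

end WeightedClifford

lemma sylvester_left_mul_eq_of_commute {R : Type*} [Ring R] {a b b' c x : R}
    (hs : Commute (b + b') x) (hp : Commute (b * b') x) (hx : a * x + x * b = c) :
    (a ^ 2 + b * b' + a * (b + b')) * x = a * c + c * b' := by
  rw [← hx, add_mul, add_mul, hp.eq, mul_assoc a, hs.eq]
  noncomm_ring

theorem clifford3_sylvester_left_necessary_general (w : Fin 3 → ℝ)
    (a b c x : CliffordAlgebra (QuadraticMap.weightedSumSquares ℝ w))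
    (hx : a * x + x * b = c) :
    (a ^ 2 + b * cliffordConj w b + a * (b + cliffordConj w b)) * x =
      a * c + c * cliffordConj w b :=
  sylvester_left_mul_eq_of_commute
    (Subalgebra.mem_center_iff.1 (WeightedClifford.add_cliffordConj_mem_center w b) x).symm
    (Subalgebra.mem_center_iff.1 (WeightedClifford.mul_cliffordConj_mem_center w b) x).symm hx

theorem clifford3_sylvester_left_necessary (w : Fin 3 → ℝ)
    (hw : ∀ i, w i = 1 ∨ w i = -1)
    (a b c x : CliffordAlgebra (QuadraticMap.weightedSumSquares ℝ w))
    (hx : a * x + x * b = c) :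
    (a ^ 2 + b * cliffordConj w b + a * (b + cliffordConj w b)) * x =
      a * c + c * cliffordConj w b :=
  clifford3_sylvester_left_necessary_general w a b c x hx
end

section
/- Let w : Fin 2 → ℝ with each w i equal to 1 or −1, let Q be the diagonal quadratic form on Fin 2 → ℝ with weights w, let A = CliffordAlgebra Q, and let conj : A → A denote Clifford conjugation (reversal composed with grade involution). Let a, b, c ∈ A and set d := a^2 + b·conj b + a·(b + conj b). If d is a unit of A, then x := d⁻¹·(a·c + c·conj b) (using the inverse of the unit d) satisfies the Sylvester equation a·x + x·b = c. -/
/-!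
Write `b' := conj b`. If `b + b'` and `b * b'` are central then `b` commutes with `b'`, so
`a (a c + c b') + (a c + c b') b = (a² + b b' + a (b + b')) c = d c`, and `d` commutes with `a`;
multiplying by `d⁻¹` gives the equation. With two generators the Clifford algebra is the
quaternion algebra `ℍ[w 0, w 1]`, where Clifford conjugation is quaternion conjugation, so
`b + b' = 2 re b` and `b b'` (the reduced norm) are indeed scalars.
-/

open CliffordAlgebra QuadraticMap
open scoped Quaternion

theorem sylvester_left_solution_of_mem_center {A : Type*} [Ring A] {a b b' : A} (c : A)
    (hs : b + b' ∈ Set.center A) (hp : b * b' ∈ Set.center A)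
    (hd : IsUnit (a ^ 2 + b * b' + a * (b + b'))) :
    a * (↑hd.unit⁻¹ * (a * c + c * b')) + ↑hd.unit⁻¹ * (a * c + c * b') * b = c := by
  rw [Semigroup.mem_center_iff] at hs hp
  have hbb' : b' * b = b * b' := by
    have := hs b
    rw [mul_add, add_mul] at this
    exact (add_left_cancel this).symm
  have hcomm : Commute a hd.unit := by
    rw [IsUnit.unit_spec]
    exact (((Commute.refl a).pow_right 2).add_right (hp a)).add_right
      ((Commute.refl a).mul_right (hs a))
  have key : a * (a * c + c * b') + (a * c + c * b') * b = hd.unit * c := by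
    rw [IsUnit.unit_spec]
    calc a * (a * c + c * b') + (a * c + c * b') * b
        = a ^ 2 * c + a * (c * (b + b')) + c * (b' * b) := by noncomm_ring
      _ = _ := by rw [hbb', hs c, hp c]; noncomm_ring
  calc a * (↑hd.unit⁻¹ * (a * c + c * b')) + ↑hd.unit⁻¹ * (a * c + c * b') * b
      = ↑hd.unit⁻¹ * (a * (a * c + c * b') + (a * c + c * b') * b) := by
        rw [← mul_assoc a, hcomm.units_inv_right.eq, mul_assoc, mul_assoc, ← mul_add]
    _ = c := by rw [key, Units.inv_mul_cancel_left]

theorem CliffordAlgebra.map_star_s13 {R M N : Type*} [CommRing R] [AddCommGroup M] [Module R M]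
    [AddCommGroup N] [Module R N] {Q₁ : QuadraticForm R M} {Q₂ : QuadraticForm R N}
    (f : Q₁ →qᵢ Q₂) (x : CliffordAlgebra Q₁) : map f (star x) = star (map f x) := by
  induction x using CliffordAlgebra.induction with
  | algebraMap r => simp
  | ι v => simp
  | mul x y hx hy => rw [star_mul, map_mul, map_mul, hx, hy, star_mul]
  | add x y hx hy => rw [star_add, map_add, map_add, hx, hy, star_add]

namespace QuadraticMap

variable {R : Type*} [CommRing R]

def weightedSumSquaresFinTwoIsometryEquiv (w : Fin 2 → R) :
    (weightedSumSquares R w).IsometryEquiv (CliffordAlgebraQuaternion.Q (w 0) (w 1)) where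
  toLinearEquiv := LinearEquiv.finTwoArrow R R
  map_app' v := by
    simp [weightedSumSquares_apply, Fin.sum_univ_two, LinearEquiv.finTwoArrow]

end QuadraticMap

namespace CliffordAlgebra

variable {R : Type*} [CommRing R] (w : Fin 2 → R)

noncomputable def weightedSumSquaresFinTwoEquivQuaternion :
    CliffordAlgebra (weightedSumSquares R w) ≃ₐ[R] ℍ[R, w 0, w 1] :=
  (equivOfIsometry (weightedSumSquaresFinTwoIsometryEquiv w)).trans CliffordAlgebraQuaternion.equiv

theorem weightedSumSquaresFinTwoEquivQuaternion_star
    (x : CliffordAlgebra (weightedSumSquares R w)) :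
    weightedSumSquaresFinTwoEquivQuaternion w (star x) =
      star (weightedSumSquaresFinTwoEquivQuaternion w x) := by
  simp [weightedSumSquaresFinTwoEquivQuaternion, equivOfIsometry_apply, map_star_s13,
    CliffordAlgebraQuaternion.toQuaternion_star]

variable {w}

theorem self_add_star_mem_center_of_finTwo (b : CliffordAlgebra (weightedSumSquares R w)) :
    b + star b ∈ Set.center (CliffordAlgebra (weightedSumSquares R w)) := by
  let e := weightedSumSquaresFinTwoEquivQuaternion w
  have : b + star b = algebraMap R _ (2 * (e b).re) := e.injective <| by
    rw [map_add, weightedSumSquaresFinTwoEquivQuaternion_star, AlgEquiv.commutes,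
      QuaternionAlgebra.self_add_star', zero_mul, add_zero,
      QuaternionAlgebra.coe_algebraMap]
  exact this ▸ Set.algebraMap_mem_center _

theorem mul_star_self_mem_center_of_finTwo (b : CliffordAlgebra (weightedSumSquares R w)) :
    b * star b ∈ Set.center (CliffordAlgebra (weightedSumSquares R w)) := by
  let e := weightedSumSquaresFinTwoEquivQuaternion w
  have : b * star b = algebraMap R _ (e b * star (e b)).re := e.injective <| by
    rw [map_mul, weightedSumSquaresFinTwoEquivQuaternion_star, AlgEquiv.commutes]
    exact QuaternionAlgebra.mul_star_eq_coe _
  exact this ▸ Set.algebraMap_mem_center _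

end CliffordAlgebra

theorem clifford2_sylvester_left_solution_general (w : Fin 2 → ℝ)
    (a b c : CliffordAlgebra (QuadraticMap.weightedSumSquares ℝ w))
    (hd : IsUnit (a ^ 2 + b * cliffordConj w b + a * (b + cliffordConj w b))) :
    a * (↑hd.unit⁻¹ * (a * c + c * cliffordConj w b)) +
      (↑hd.unit⁻¹ * (a * c + c * cliffordConj w b)) * b = c :=
  -- `cliffordConj w b` unfolds to `star b` (`CliffordAlgebra.star_def`).
  sylvester_left_solution_of_mem_center c (self_add_star_mem_center_of_finTwo b)
    (mul_star_self_mem_center_of_finTwo b) hd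

theorem clifford2_sylvester_left_solution (w : Fin 2 → ℝ)
    (hw : ∀ i, w i = 1 ∨ w i = -1)
    (a b c : CliffordAlgebra (QuadraticMap.weightedSumSquares ℝ w))
    (hd : IsUnit (a ^ 2 + b * cliffordConj w b + a * (b + cliffordConj w b))) :
    a * (↑hd.unit⁻¹ * (a * c + c * cliffordConj w b)) +
      (↑hd.unit⁻¹ * (a * c + c * cliffordConj w b)) * b = c :=
  clifford2_sylvester_left_solution_general w a b c hd
end
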